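/- arXiv:2310.02355 — 8 statements merged into one kernel-verified Lean document; each statement's English description precedes it below -/
import Mathlib

section
/- In any birelational model M, the satisfaction relation of ICTL is monotone with respect to the preorder P: for every ICTL formula φ and worlds w, w', if M, w ⊨ φ and w P w' then M, w' ⊨ φ. -/
/-- A birelational frame: a nonempty countable set of worlds with a preorder `P`
(the intuitionistic/knowledge order), a serial relation `R` (the temporal
transition relation), satisfying the confluence conditions C1 and C2. -/
structure BiFrame (W : Type) where
  nonempty : Nonempty W
  countable : Countable W
  P : W → W → Prop
  R : W → W → Prop
  P_refl : ∀ x, P x x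
  P_trans : ∀ x y z, P x y → P y z → P x z
  R_serial : ∀ x, ∃ y, R x y
  C1 : ∀ x y z, R x y → P y z → ∃ u, P x u ∧ R u z
  C2 : ∀ x y z, P x z → R x y → ∃ u, P y u ∧ R z u

/-- A path: an infinite `R`-sequence of worlds. -/
def BiFrame.IsPath {W : Type} (F : BiFrame W) (ρ : ℕ → W) : Prop :=
  ∀ i : ℕ, F.R (ρ i) (ρ (i + 1))

/-- A birelational model: a birelational frame with a P-monotone valuation. -/
structure BiModel (W : Type) (Atom : Type) extends BiFrame W where
  V : W → Set Atom
  V_mono : ∀ w w', P w w' → V w ⊆ V w'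

/-- Formulae of Intuitionistic Computation Tree Logic. -/
inductive ICTL (Atom : Type) : Type where
  | atom : Atom → ICTL Atom
  | bot  : ICTL Atom
  | and  : ICTL Atom → ICTL Atom → ICTL Atom
  | or   : ICTL Atom → ICTL Atom → ICTL Atom
  | impl : ICTL Atom → ICTL Atom → ICTL Atom
  | EX   : ICTL Atom → ICTL Atom
  | EU   : ICTL Atom → ICTL Atom → ICTL Atom
  | ER   : ICTL Atom → ICTL Atom → ICTL Atom
  | AX   : ICTL Atom → ICTL Atom
  | AU   : ICTL Atom → ICTL Atom → ICTL Atom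
  | AR   : ICTL Atom → ICTL Atom → ICTL Atom

/-- Intuitionistic negation. -/
def ICTL.neg {Atom : Type} (φ : ICTL Atom) : ICTL Atom := ICTL.impl φ ICTL.bot

/-- The ICTL satisfaction relation on birelational models. -/
def Sat {W Atom : Type} (M : BiModel W Atom) : ICTL Atom → W → Prop
  | .atom p, w => p ∈ M.V w
  | .bot, _ => False
  | .and φ ψ, w => Sat M φ w ∧ Sat M ψ w
  | .or φ ψ, w => Sat M φ w ∨ Sat M ψ w
  | .impl φ ψ, w => ∀ w', M.P w w' → Sat M φ w' → Sat M ψ w'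
  | .EX φ, w => ∃ ρ : ℕ → W, M.toBiFrame.IsPath ρ ∧ ρ 0 = w ∧ Sat M φ (ρ 1)
  | .EU φ ψ, w => ∃ ρ : ℕ → W, M.toBiFrame.IsPath ρ ∧ ρ 0 = w ∧
      ∃ j : ℕ, Sat M ψ (ρ j) ∧ ∀ i < j, Sat M φ (ρ i)
  | .ER φ ψ, w => ∃ ρ : ℕ → W, M.toBiFrame.IsPath ρ ∧ ρ 0 = w ∧
      ((∀ i : ℕ, Sat M ψ (ρ i)) ∨ ∃ j : ℕ, Sat M φ (ρ j) ∧ ∀ i ≤ j, Sat M ψ (ρ i))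
  | .AX φ, w => ∀ w', M.P w w' → ∀ ρ : ℕ → W, M.toBiFrame.IsPath ρ → ρ 0 = w' →
      Sat M φ (ρ 1)
  | .AU φ ψ, w => ∀ w', M.P w w' → ∀ ρ : ℕ → W, M.toBiFrame.IsPath ρ → ρ 0 = w' →
      ∃ j : ℕ, Sat M ψ (ρ j) ∧ ∀ i < j, Sat M φ (ρ i)
  | .AR φ ψ, w => ∀ w', M.P w w' → ∀ ρ : ℕ → W, M.toBiFrame.IsPath ρ → ρ 0 = w' →
      ((∀ i : ℕ, Sat M ψ (ρ i)) ∨ ∃ j : ℕ, Sat M φ (ρ j) ∧ ∀ i ≤ j, Sat M ψ (ρ i))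

/-- The satisfaction set ⟦φ⟧ of a formula. -/
def sem {W Atom : Type} (M : BiModel W Atom) (φ : ICTL Atom) : Set W :=
  {w | Sat M φ w}

/-- `upset M Y = Y↑`: the worlds all of whose `P`-successors lie in `Y`. -/
def upset {W Atom : Type} (M : BiModel W Atom) (Y : Set W) : Set W :=
  {w | ∀ w', M.P w w' → w' ∈ Y}

/-- Existential predecessors. -/
def preE {W Atom : Type} (M : BiModel W Atom) (X : Set W) : Set W :=
  {w' | ∃ w ∈ X, M.R w' w}

/-- Universal predecessors. -/
def preA {W Atom : Type} (M : BiModel W Atom) (X : Set W) : Set W :=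
  {w' | ∀ w, M.R w' w → w ∈ X}

/-- Path lifting along `P` using confluence condition C2. -/
lemma path_lift {W : Type} (F : BiFrame W) (ρ : ℕ → W) (hρ : F.IsPath ρ)
    (w' : W) (hP : F.P (ρ 0) w') :
    ∃ σ : ℕ → W, F.IsPath σ ∧ σ 0 = w' ∧ ∀ i, F.P (ρ i) (σ i) := by
  have step : ∀ n (x : {x : W // F.P (ρ n) x}),
      {y : W // F.P (ρ (n + 1)) y ∧ F.R x.1 y} := by
    intro n x
    have h := F.C2 (ρ n) (ρ (n + 1)) x.1 x.2 (hρ n)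
    exact ⟨h.choose, h.choose_spec⟩
  let aux : ∀ n, {x : W // F.P (ρ n) x} := fun n =>
    Nat.rec ⟨w', hP⟩ (fun n x => ⟨(step n x).1, (step n x).2.1⟩) n
  refine ⟨fun n => (aux n).1, fun i => ?_, rfl, fun i => (aux i).2⟩
  exact (step i (aux i)).2.2

/-- Monotonicity of ICTL satisfaction along the preorder `P`. -/
theorem stmt1 {W Atom : Type} (M : BiModel W Atom) (φ : ICTL Atom) (w w' : W)
    (h : Sat M φ w) (hP : M.P w w') : Sat M φ w' := by
  induction φ generalizing w w' with
  | atom p => exact M.V_mono w w' hP h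
  | bot => exact h
  | and φ ψ ih1 ih2 => exact ⟨ih1 w w' h.1 hP, ih2 w w' h.2 hP⟩
  | or φ ψ ih1 ih2 =>
    rcases h with h | h
    · exact Or.inl (ih1 w w' h hP)
    · exact Or.inr (ih2 w w' h hP)
  | impl φ ψ ih1 ih2 =>
    intro w'' hP' hφ
    exact h w'' (M.P_trans w w' w'' hP hP') hφ
  | EX φ ih =>
    obtain ⟨ρ, hρ, h0, h1⟩ := h
    obtain ⟨σ, hσ, hσ0, hσP⟩ := path_lift M.toBiFrame ρ hρ w' (h0 ▸ hP)
    exact ⟨σ, hσ, hσ0, ih _ _ h1 (hσP 1)⟩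
  | EU φ ψ ih1 ih2 =>
    obtain ⟨ρ, hρ, h0, j, hj, hi⟩ := h
    obtain ⟨σ, hσ, hσ0, hσP⟩ := path_lift M.toBiFrame ρ hρ w' (h0 ▸ hP)
    exact ⟨σ, hσ, hσ0, j, ih2 _ _ hj (hσP j), fun i hij => ih1 _ _ (hi i hij) (hσP i)⟩
  | ER φ ψ ih1 ih2 =>
    obtain ⟨ρ, hρ, h0, hcase⟩ := h
    obtain ⟨σ, hσ, hσ0, hσP⟩ := path_lift M.toBiFrame ρ hρ w' (h0 ▸ hP)
    refine ⟨σ, hσ, hσ0, ?_⟩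
    rcases hcase with hall | ⟨j, hj, hi⟩
    · exact Or.inl fun i => ih2 _ _ (hall i) (hσP i)
    · exact Or.inr ⟨j, ih1 _ _ hj (hσP j), fun i hij => ih2 _ _ (hi i hij) (hσP i)⟩
  | AX φ ih =>
    intro w'' hP' ρ hρ h0
    exact h w'' (M.P_trans w w' w'' hP hP') ρ hρ h0
  | AU φ ψ ih1 ih2 =>
    intro w'' hP' ρ hρ h0
    exact h w'' (M.P_trans w w' w'' hP hP') ρ hρ h0
  | AR φ ψ ih1 ih2 =>
    intro w'' hP' ρ hρ h0
    exact h w'' (M.P_trans w w' w'' hP hP') ρ hρ h0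
end

section
/- The ICTL formula E(φ U ψ) ↔ ψ ∨ (φ ∧ EX E(φ U ψ)) is valid: it is satisfied at every world of every birelational model, where χ₁ ↔ χ₂ abbreviates (χ₁ → χ₂) ∧ (χ₂ → χ₁) with intuitionistic implication. -/
/-- An arbitrary path from a given world, built using seriality. -/
noncomputable def anyPath {W : Type} (F : BiFrame W) (w : W) : ℕ → W
  | 0 => w
  | n + 1 => Classical.choose (F.R_serial (anyPath F w n))

lemma anyPath_isPath {W : Type} (F : BiFrame W) (w : W) : F.IsPath (anyPath F w) :=
  fun i => Classical.choose_spec (F.R_serial (anyPath F w i))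

/-- Validity of `E(φ U ψ) ↔ ψ ∨ (φ ∧ EX E(φ U ψ))` (intuitionistic biconditional). -/
theorem stmt5 {W Atom : Type} (M : BiModel W Atom) (w : W) (φ ψ : ICTL Atom) :
    Sat M (ICTL.and
      (ICTL.impl (ICTL.EU φ ψ) (ICTL.or ψ (ICTL.and φ (ICTL.EX (ICTL.EU φ ψ)))))
      (ICTL.impl (ICTL.or ψ (ICTL.and φ (ICTL.EX (ICTL.EU φ ψ)))) (ICTL.EU φ ψ))) w := by
  constructor
  · intro w' _ h
    obtain ⟨ρ, hρ, h0, j, hψ, hφ⟩ := h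
    cases j with
    | zero => exact Or.inl (h0 ▸ hψ)
    | succ j =>
      refine Or.inr ⟨h0 ▸ hφ 0 (Nat.succ_pos j), ρ, hρ, h0,
        (fun i => ρ (i + 1)), fun i => hρ (i + 1), rfl, j, hψ, fun i hi => hφ (i + 1) (by omega)⟩
  · intro w' _ h
    cases h with
    | inl hψ =>
      exact ⟨anyPath M.toBiFrame w', anyPath_isPath _ _, rfl, 0, hψ, fun i hi => absurd hi (by omega)⟩
    | inr h =>
      obtain ⟨hφ, ρ, hρ, h0, σ, hσ, h0', j, hψ, hφ'⟩ := h
      refine ⟨fun i => Nat.rec w' (fun n _ => σ n) i, fun i => ?_, rfl, j + 1, hψ, fun i hi => ?_⟩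
      · cases i with
        | zero => simpa [h0', ← h0] using hρ 0
        | succ n => exact hσ n
      · cases i with
        | zero => exact hφ
        | succ n => exact hφ' n (by omega)
end

section
/- The ICTL formula E(φ R ψ) ↔ ψ ∧ (φ ∨ EX E(φ R ψ)) is valid in every birelational model. -/
/-- Validity of `E(φ R ψ) ↔ ψ ∧ (φ ∨ EX E(φ R ψ))` (intuitionistic biconditional). -/
theorem stmt6 {W Atom : Type} (M : BiModel W Atom) (w : W) (φ ψ : ICTL Atom) :
    Sat M (ICTL.and
      (ICTL.impl (ICTL.ER φ ψ) (ICTL.and ψ (ICTL.or φ (ICTL.EX (ICTL.ER φ ψ)))))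
      (ICTL.impl (ICTL.and ψ (ICTL.or φ (ICTL.EX (ICTL.ER φ ψ)))) (ICTL.ER φ ψ))) w := by
  constructor
  · -- ER → ψ ∧ (φ ∨ EX ER)
    rintro w' _ ⟨ρ, hρ, h0, hcase⟩
    have shift : BiFrame.IsPath M.toBiFrame (fun n => ρ (n + 1)) := fun i => hρ (i + 1)
    rcases hcase with hall | ⟨j, hφ, hψ⟩
    · exact ⟨h0 ▸ hall 0, Or.inr ⟨ρ, hρ, h0, fun n => ρ (n + 1), shift, rfl,
        Or.inl fun i => hall (i + 1)⟩⟩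
    · refine ⟨h0 ▸ hψ 0 (Nat.zero_le _), ?_⟩
      cases j with
      | zero => exact Or.inl (h0 ▸ hφ)
      | succ k =>
        exact Or.inr ⟨ρ, hρ, h0, fun n => ρ (n + 1), shift, rfl,
          Or.inr ⟨k, hφ, fun i hi => hψ (i + 1) (Nat.succ_le_succ hi)⟩⟩
  · -- ψ ∧ (φ ∨ EX ER) → ER
    rintro w' _ ⟨hψ, hor⟩
    rcases hor with hφ | ⟨σ, hσ, hσ0, τ, hτ, hτ0, hcase⟩
    · -- build an arbitrary path from w'
      classical
      let f : W → W := fun x => Classical.choose (M.R_serial x)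
      have hf : ∀ x, M.R x (f x) := fun x => Classical.choose_spec (M.R_serial x)
      refine ⟨fun n => f^[n] w', fun i => ?_, rfl, Or.inr ⟨0, hφ, ?_⟩⟩
      · show M.R (f^[i] w') (f^[i + 1] w')
        rw [Function.iterate_succ_apply']; exact hf _
      · intro i hi; interval_cases i; exact hψ
    · -- prepend w' to τ
      have key : M.R w' (τ 0) := by rw [hτ0, ← hσ0]; exact hσ 0
      refine ⟨fun n => Nat.rec w' (fun k _ => τ k) n, fun i => ?_, rfl, ?_⟩
      · cases i with
        | zero => exact key
        | succ k => exact hτ k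
      rcases hcase with hall | ⟨j, hφ', hψ'⟩
      · refine Or.inl fun i => ?_
        cases i with
        | zero => exact hψ
        | succ k => exact hall k
      · refine Or.inr ⟨j + 1, hφ', fun i hi => ?_⟩
        cases i with
        | zero => exact hψ
        | succ k => exact hψ' k (Nat.le_of_succ_le_succ hi)
end

section
/- The ICTL formula ψ ∧ (φ ∨ AX A(φ R ψ)) → A(φ R ψ) is valid in every birelational model (where → is intuitionistic implication). -/
lemma liftPath {W : Type} (F : BiFrame W) (ρ : ℕ → W) (hρ : F.IsPath ρ)
    (w' : W) (h0 : F.P (ρ 0) w') :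
    ∃ ρ' : ℕ → W, F.IsPath ρ' ∧ ρ' 0 = w' ∧ ∀ i, F.P (ρ i) (ρ' i) := by
  classical
  -- build ρ' recursively with the invariant P (ρ i) (ρ' i)
  let f : ∀ n : ℕ, {x : W // F.P (ρ n) x} := fun n =>
    Nat.rec (⟨w', h0⟩ : {x : W // F.P (ρ 0) x})
      (fun n p => ⟨Classical.choose (F.C2 (ρ n) (ρ (n+1)) p.1 p.2 (hρ n)),
        (Classical.choose_spec (F.C2 (ρ n) (ρ (n+1)) p.1 p.2 (hρ n))).1⟩) n
  refine ⟨fun n => (f n).1, ?_, rfl, fun i => (f i).2⟩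
  intro i
  exact (Classical.choose_spec (F.C2 (ρ i) (ρ (i+1)) (f i).1 (f i).2 (hρ i))).2

lemma Sat_mono {W Atom : Type} (M : BiModel W Atom) (χ : ICTL Atom) :
    ∀ w w', M.P w w' → Sat M χ w → Sat M χ w' := by
  induction χ with
  | atom p => intro w w' h hs; exact M.V_mono w w' h hs
  | bot => intro w w' h hs; exact hs
  | and φ ψ ih1 ih2 => intro w w' h hs; exact ⟨ih1 w w' h hs.1, ih2 w w' h hs.2⟩
  | or φ ψ ih1 ih2 =>
      intro w w' h hs
      exact hs.elim (fun a => Or.inl (ih1 w w' h a)) (fun a => Or.inr (ih2 w w' h a))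
  | impl φ ψ ih1 ih2 =>
      intro w w' h hs w'' h' hφ
      exact hs w'' (M.P_trans w w' w'' h h') hφ
  | EX φ ih =>
      intro w w' h hs
      obtain ⟨ρ, hρ, h0, h1⟩ := hs
      obtain ⟨ρ', hρ', h0', hall⟩ := liftPath M.toBiFrame ρ hρ w' (h0 ▸ h)
      exact ⟨ρ', hρ', h0', ih _ _ (hall 1) h1⟩
  | EU φ ψ ih1 ih2 =>
      intro w w' h hs
      obtain ⟨ρ, hρ, h0, j, hj, hlt⟩ := hs
      obtain ⟨ρ', hρ', h0', hall⟩ := liftPath M.toBiFrame ρ hρ w' (h0 ▸ h)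
      exact ⟨ρ', hρ', h0', j, ih2 _ _ (hall j) hj, fun i hi => ih1 _ _ (hall i) (hlt i hi)⟩
  | ER φ ψ ih1 ih2 =>
      intro w w' h hs
      obtain ⟨ρ, hρ, h0, hc⟩ := hs
      obtain ⟨ρ', hρ', h0', hall⟩ := liftPath M.toBiFrame ρ hρ w' (h0 ▸ h)
      refine ⟨ρ', hρ', h0', ?_⟩
      rcases hc with hc | ⟨j, hj, hle⟩
      · exact Or.inl fun i => ih2 _ _ (hall i) (hc i)
      · exact Or.inr ⟨j, ih1 _ _ (hall j) hj, fun i hi => ih2 _ _ (hall i) (hle i hi)⟩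
  | AX φ ih =>
      intro w w' h hs w'' h' ρ hρ h0
      exact hs w'' (M.P_trans w w' w'' h h') ρ hρ h0
  | AU φ ψ ih1 ih2 =>
      intro w w' h hs w'' h' ρ hρ h0
      exact hs w'' (M.P_trans w w' w'' h h') ρ hρ h0
  | AR φ ψ ih1 ih2 =>
      intro w w' h hs w'' h' ρ hρ h0
      exact hs w'' (M.P_trans w w' w'' h h') ρ hρ h0

/-- Validity of `ψ ∧ (φ ∨ AX A(φ R ψ)) → A(φ R ψ)`. -/
theorem stmt8 {W Atom : Type} (M : BiModel W Atom) (w : W) (φ ψ : ICTL Atom) :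
    Sat M (ICTL.impl (ICTL.and ψ (ICTL.or φ (ICTL.AX (ICTL.AR φ ψ))))
      (ICTL.AR φ ψ)) w := by
  intro w' _ hs
  obtain ⟨hψ, hcase⟩ := hs
  intro w'' hP ρ hρ h0
  have hψ0 : Sat M ψ (ρ 0) := h0 ▸ Sat_mono M ψ w' w'' hP hψ
  rcases hcase with hφ | hAX
  · exact Or.inr ⟨0, h0 ▸ Sat_mono M φ w' w'' hP hφ,
      fun i hi => Nat.le_zero.mp hi ▸ hψ0⟩
  · have hAR : Sat M (ICTL.AR φ ψ) (ρ 1) := hAX w'' hP ρ hρ h0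
    have hshift : M.toBiFrame.IsPath (fun i => ρ (i + 1)) := fun i => hρ (i + 1)
    have := hAR (ρ 1) (M.P_refl (ρ 1)) (fun i => ρ (i + 1)) hshift rfl
    rcases this with hall | ⟨j, hj, hle⟩
    · refine Or.inl fun i => ?_
      cases i with
      | zero => exact hψ0
      | succ n => exact hall n
    · refine Or.inr ⟨j + 1, hj, fun i hi => ?_⟩
      cases i with
      | zero => exact hψ0
      | succ n => exact hle n (Nat.succ_le_succ_iff.mp hi)
end

section
/- The ICTL formula A(p U q) → q ∨ (p ∧ AX A(p U q)) is not valid: there exists a finite birelational model and a world at which it fails. -/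
abbrev Wd := Fin 4
abbrev Atm := Fin 2

def rrel : Wd → Wd → Bool := fun x y =>
  (x == 0 && y == 1) || (x == 1 && y == 1) || (x == 2 && y == 2) ||
  (x == 2 && y == 3) || (x == 3 && y == 3)

def prel : Wd → Wd → Bool := fun x y =>
  x == y || (x == 0 && y == 2) || (x == 1 && y == 2)

def vfun : Wd → Atm → Bool := fun w a =>
  match w, a with
  | 0, 0 => true
  | 1, 1 => true
  | 2, _ => true
  | _, _ => false

lemma vmono : ∀ w w' a, prel w w' = true → vfun w a = true → vfun w' a = true := by
  decide

def M9 : BiModel Wd Atm where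
  nonempty := ⟨0⟩
  countable := inferInstance
  P := fun x y => prel x y = true
  R := fun x y => rrel x y = true
  P_refl := by decide
  P_trans := by decide
  R_serial := by decide
  C1 := by decide
  C2 := by decide
  V := fun w => {a | vfun w a = true}
  V_mono := fun w w' h a ha => vmono w w' a h ha

lemma r0 : ∀ y : Wd, rrel 0 y = true → y = 1 := by decide

/-- `A(p U q) → q ∨ (p ∧ AX A(p U q))` is not valid: it fails at some world of some
finite birelational model. -/
theorem stmt9 : ∃ (W Atom : Type) (_ : Finite W) (M : BiModel W Atom)
    (p q : Atom) (w : W),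
    ¬ Sat M (ICTL.impl (ICTL.AU (ICTL.atom p) (ICTL.atom q))
      (ICTL.or (ICTL.atom q)
        (ICTL.and (ICTL.atom p)
          (ICTL.AX (ICTL.AU (ICTL.atom p) (ICTL.atom q)))))) w := by
  refine ⟨Wd, Atm, inferInstance, M9, 0, 1, 0, ?_⟩
  intro H
  have hA : Sat M9 (ICTL.AU (.atom 0) (.atom 1)) 0 := by
    intro w' hw' ρ hρ h0
    fin_cases w'
    · -- w' = 0 : ρ 1 = 1, take j = 1
      have h1 : ρ 1 = 1 := r0 _ (by have := hρ 0; rwa [h0] at this)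
      refine ⟨1, ?_, ?_⟩
      · show vfun (ρ 1) 1 = true; rw [h1]; decide
      · intro i hi
        interval_cases i
        show vfun (ρ 0) 0 = true; rw [h0]; decide
    · exact absurd (show prel 0 1 = true from hw') (by decide)
    · -- w' = 2 : q holds immediately
      refine ⟨0, ?_, ?_⟩
      · show vfun (ρ 0) 1 = true; rw [h0]; decide
      · intro i hi; omega
    · exact absurd (show prel 0 3 = true from hw') (by decide)
  have hC := H 0 (show prel 0 0 = true by decide) hA
  rcases hC with hq | ⟨_, hAX⟩
  · exact absurd (show vfun 0 1 = true from hq) (by decide)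
  · have hpath : M9.toBiFrame.IsPath (fun n => if n = 0 then (2 : Wd) else 3) := by
      intro i
      cases i
      · exact (show rrel 2 3 = true by decide)
      · exact (show rrel 3 3 = true by decide)
    have h3 := hAX 2 (show prel 0 2 = true by decide) _ hpath rfl
    have hconst : M9.toBiFrame.IsPath (fun _ => (3 : Wd)) := by
      intro i; exact (show rrel 3 3 = true by decide)
    obtain ⟨j, hq, -⟩ := h3 3 (show prel 3 3 = true by decide) (fun _ => (3 : Wd)) hconst rfl
    exact absurd (show vfun 3 1 = true from hq) (by decide)
end

section
/- The ICTL formula A(q R p) → p ∧ (q ∨ AX A(q R p)) is not valid: there exists a finite birelational model and a world at which it fails. -/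
/-!
At `w₁` every path is `w₁ w₂ w₂ …`, on which `q` releases `p`, and at its other `P`-successor
`v₁` both atoms hold, so `A(q R p)` holds at `w₁`. But `q` fails at `w₁`, and `AX` at `w₁` also
ranges over the paths from `v₁`, one of which steps to `v₂`, where `p` and hence `A(q R p)` fail.
-/

namespace BiFrame

variable {W : Type} (F : BiFrame W)

theorem exists_path (w : W) : ∃ ρ : ℕ → W, F.IsPath ρ ∧ ρ 0 = w := by
  choose next hnext using F.R_serial
  refine ⟨fun n => next^[n] w, fun i => ?_, rfl⟩
  simpa only [Function.iterate_succ_apply'] using hnext _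

theorem exists_path_of_R {w u : W} (h : F.R w u) :
    ∃ ρ : ℕ → W, F.IsPath ρ ∧ ρ 0 = w ∧ ρ 1 = u := by
  obtain ⟨ρ, hρ, hρ₀⟩ := F.exists_path u
  refine ⟨fun | 0 => w | n + 1 => ρ n,
    fun | 0 => show F.R w (ρ 0) from hρ₀ ▸ h | i + 1 => hρ i, rfl, hρ₀⟩

end BiFrame

section Sat

variable {W Atom : Type} {M : BiModel W Atom} {φ ψ : ICTL Atom} {w : W}

theorem sat_of_sat_AR (h : Sat M (.AR φ ψ) w) : Sat M ψ w := by
  obtain ⟨ρ, hρ, hρ₀⟩ := M.exists_path w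
  rcases h w (M.P_refl w) ρ hρ hρ₀ with hall | ⟨j, -, hle⟩
  · exact hρ₀ ▸ hall 0
  · exact hρ₀ ▸ hle 0 j.zero_le

theorem sat_of_sat_AX {w' u : W} (h : Sat M (.AX φ) w) (hP : M.P w w') (hR : M.R w' u) :
    Sat M φ u := by
  obtain ⟨ρ, hρ, hρ₀, hρ₁⟩ := M.exists_path_of_R hR
  exact hρ₁ ▸ h w' hP ρ hρ hρ₀

end Sat

inductive World | w₁ | w₂ | v₁ | v₂
  deriving DecidableEq

instance : Fintype World := ⟨{.w₁, .w₂, .v₁, .v₂}, fun x => by cases x <;> simp⟩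

inductive Var | p | q

open World Var

/-- `p` also holds at `w₂`: the release clause `∀ i ≤ j` needs `p` at the world where `q`
releases it, and `w₁ w₂ w₂ …` is the only path from `w₁`. -/
def counterModel : BiModel World Var where
  nonempty := ⟨w₁⟩
  countable := inferInstance
  P x y := x = y ∨ ((x = w₁ ∨ x = w₂) ∧ y = v₁)
  R x y := (x, y) ∈ [(w₁, w₂), (w₂, w₂), (v₁, v₁), (v₁, v₂), (v₂, v₂)]
  P_refl := by decide
  P_trans := by decide
  R_serial := by decide
  C1 := by decide
  C2 := by decide
  V
    | w₁ => {p}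
    | w₂ => {p, q}
    | v₁ => {p, q}
    | v₂ => ∅
  V_mono := by
    rintro _ _ (rfl | ⟨rfl | rfl, rfl⟩) <;> simp

theorem counterModel_R_w₁ {y : World} : counterModel.R w₁ y ↔ y = w₂ := by
  cases y <;> simp [counterModel]

theorem sat_AR_q_p_w₁ : Sat counterModel (.AR (.atom q) (.atom p)) w₁ := by
  rintro w' (rfl | ⟨-, rfl⟩) ρ hρ hρ₀
  · have hρ₁ : ρ 1 = w₂ := counterModel_R_w₁.mp (hρ₀ ▸ hρ 0)
    refine .inr ⟨1, by simp [Sat, counterModel, hρ₁], fun i hi => ?_⟩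
    interval_cases i <;> simp [Sat, counterModel, hρ₀, hρ₁]
  · refine .inr ⟨0, by simp [Sat, counterModel, hρ₀], fun i hi => ?_⟩
    simp [Nat.le_zero.mp hi, Sat, counterModel, hρ₀]

/-- `A(q R p) → p ∧ (q ∨ AX A(q R p))` is not valid: it fails at some world of some
finite birelational model. -/
theorem stmt10 : ∃ (W Atom : Type) (_ : Finite W) (M : BiModel W Atom)
    (p q : Atom) (w : W),
    ¬ Sat M (ICTL.impl (ICTL.AR (ICTL.atom q) (ICTL.atom p))
      (ICTL.and (ICTL.atom p)
        (ICTL.or (ICTL.atom q)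
          (ICTL.AX (ICTL.AR (ICTL.atom q) (ICTL.atom p)))))) w := by
  refine ⟨World, Var, inferInstance, counterModel, p, q, w₁, fun h => ?_⟩
  obtain ⟨-, hq | hAX⟩ := h w₁ (counterModel.P_refl w₁) sat_AR_q_p_w₁
  · simp [Sat, counterModel] at hq
  · have hv₂ := sat_of_sat_AR (sat_of_sat_AX hAX (w' := v₁) (u := v₂)
      (by simp [counterModel]) (by simp [counterModel]))
    simp [Sat, counterModel] at hv₂
end

section
/- In every birelational frame, if P is the identity relation then the classically valid duality ¬AX¬φ → EX φ holds at every world for every formula φ; but there exists a birelational model (with nontrivial P) and a world where ¬AX¬p → EX p fails for an atom p. -/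
/-- P relation for the counterexample on `Fin 4`. -/
def cexP (x y : Fin 4) : Prop := x = y ∨ (x = 0 ∧ y = 1) ∨ (x = 2 ∧ y = 3)

/-- R relation for the counterexample. -/
def cexR (x y : Fin 4) : Prop :=
  (x = 0 ∧ y = 2) ∨ (x = 1 ∧ y = 3) ∨ (x = 2 ∧ y = 2) ∨ (x = 3 ∧ y = 3)

instance : ∀ x y, Decidable (cexP x y) := fun x y => by unfold cexP; infer_instance
instance : ∀ x y, Decidable (cexR x y) := fun x y => by unfold cexR; infer_instance

/-- Counterexample model. -/
def cexM : BiModel (Fin 4) Unit where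
  nonempty := ⟨0⟩
  countable := inferInstance
  P := cexP
  R := cexR
  P_refl := by decide
  P_trans := by decide
  R_serial := by decide
  C1 := by decide
  C2 := by decide
  V := fun w => if w = 3 then {()} else ∅
  V_mono := by
    intro w w' h a ha
    split at ha
    · have hw : w = 3 := by assumption
      subst hw
      have : w' = 3 := by
        rcases h with h | ⟨h, _⟩ | ⟨_, h⟩
        · exact h.symm
        · exact absurd h (by decide)
        · exact h
      simp [this]
    · exact absurd ha (Set.notMem_empty a)

/-- When `P` is the identity, the classical duality `¬AX¬φ → EX φ` holds at every
world; but there is a birelational model with nontrivial `P` and a world where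
`¬AX¬p → EX p` fails for an atom `p`. -/
theorem stmt14 :
    (∀ (W Atom : Type) (M : BiModel W Atom), (∀ x y : W, M.P x y ↔ x = y) →
      ∀ (φ : ICTL Atom) (w : W),
        Sat M (ICTL.impl (ICTL.neg (ICTL.AX (ICTL.neg φ))) (ICTL.EX φ)) w) ∧
    (∃ (W Atom : Type) (M : BiModel W Atom) (p : Atom) (w : W),
      (∃ x y : W, M.P x y ∧ x ≠ y) ∧
      ¬ Sat M (ICTL.impl (ICTL.neg (ICTL.AX (ICTL.neg (ICTL.atom p))))
          (ICTL.EX (ICTL.atom p))) w) := by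
  constructor
  · intro W Atom M hP φ w
    simp only [ICTL.neg, Sat]
    intro w' hw hneg
    by_contra hEX
    refine hneg w' ((hP w' w').mpr rfl) ?_
    intro u hu ρ hρ h0 v hv hφ
    have huw : u = w' := ((hP w' u).mp hu).symm
    have hv1 : v = ρ 1 := ((hP (ρ 1) v).mp hv).symm
    exact hEX ⟨ρ, hρ, by rw [h0, huw], by rwa [← hv1]⟩
  · refine ⟨Fin 4, Unit, cexM, (), 0, ⟨0, 1, Or.inr (Or.inl ⟨rfl, rfl⟩), by decide⟩, ?_⟩
    simp only [ICTL.neg, Sat]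
    intro h
    -- apply h at w' = 0
    have path13 : cexM.toBiFrame.IsPath (fun n => if n = 0 then 1 else 3) := by
      intro i
      show cexR _ _
      by_cases hi : i = 0 <;> simp [hi, cexR]
    have hEXfail : ¬ (∃ ρ : ℕ → Fin 4, cexM.toBiFrame.IsPath ρ ∧ ρ 0 = 0 ∧
        () ∈ cexM.V (ρ 1)) := by
      rintro ⟨ρ, hρ, h0, h1⟩
      have hr : cexM.R (ρ 0) (ρ 1) := hρ 0
      rw [h0] at hr
      have : ρ 1 = 2 := by
        rcases hr with ⟨_, h⟩ | ⟨h, _⟩ | ⟨h, _⟩ | ⟨h, _⟩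
        · exact h
        all_goals exact absurd h (by decide)
      rw [this] at h1
      exact absurd h1 (by simp [cexM])
    refine hEXfail (h 0 (Or.inl rfl) ?_)
    intro w'' hw'' hAX
    refine hAX 1 ?_ (fun n => if n = 0 then 1 else 3) path13 rfl 3 (Or.inl rfl) ?_
    · rcases hw'' with h | ⟨_, h⟩ | ⟨h, _⟩
      · rw [← h]; exact Or.inr (Or.inl ⟨rfl, rfl⟩)
      · rw [h]; exact Or.inl rfl
      · exact absurd h (by decide)
    · simp [cexM]
end

section
/- In any birelational model M with worlds w, w' such that w P w': if M, w ⊨ E(φ U ψ) then M, w' ⊨ E(φ U ψ). (The existential-until satisfaction set is P-upward closed, proved via the path-lifting lemma.) -/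
/-- Path lifting: a path from `ρ 0` lifts along `P` to a path from `w'`. -/
lemma path_lift_s15 {W Atom : Type} (M : BiModel W Atom) (ρ : ℕ → W)
    (hρ : M.toBiFrame.IsPath ρ) (w' : W) (h : M.P (ρ 0) w') :
    ∃ τ : ℕ → W, M.toBiFrame.IsPath τ ∧ τ 0 = w' ∧ ∀ i, M.P (ρ i) (τ i) := by
  have step : ∀ i (t : W), M.P (ρ i) t → ∃ u, M.P (ρ (i+1)) u ∧ M.R t u :=
    fun i t ht => M.C2 (ρ i) (ρ (i+1)) t ht (hρ i)
  let F : ∀ i : ℕ, {t : W // M.P (ρ i) t} := fun i =>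
    Nat.rec ⟨w', h⟩
      (fun n p => ⟨(step n p.1 p.2).choose, (step n p.1 p.2).choose_spec.1⟩) i
  exact ⟨fun i => (F i).1, fun i => (step i (F i).1 (F i).2).choose_spec.2,
    rfl, fun i => (F i).2⟩

/-- Satisfaction is `P`-monotone. -/
lemma sat_mono {W Atom : Type} (M : BiModel W Atom) (φ : ICTL Atom) :
    ∀ w w', M.P w w' → Sat M φ w → Sat M φ w' := by
  induction φ with
  | atom p => exact fun w w' hP h => M.V_mono w w' hP h
  | bot => exact fun w w' _ h => h
  | and φ ψ ihφ ihψ =>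
      exact fun w w' hP h => ⟨ihφ w w' hP h.1, ihψ w w' hP h.2⟩
  | or φ ψ ihφ ihψ =>
      exact fun w w' hP h => h.elim (fun h => Or.inl (ihφ w w' hP h))
        (fun h => Or.inr (ihψ w w' hP h))
  | impl φ ψ ihφ ihψ =>
      exact fun w w' hP h w'' hP' hφ => h w'' (M.P_trans w w' w'' hP hP') hφ
  | EX φ ih =>
      rintro w w' hP ⟨ρ, hρ, h0, h1⟩
      obtain ⟨τ, hτ, hτ0, hτP⟩ := path_lift_s15 M ρ hρ w' (h0 ▸ hP)
      exact ⟨τ, hτ, hτ0, ih (ρ 1) (τ 1) (hτP 1) h1⟩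
  | EU φ ψ ihφ ihψ =>
      rintro w w' hP ⟨ρ, hρ, h0, j, hj, hi⟩
      obtain ⟨τ, hτ, hτ0, hτP⟩ := path_lift_s15 M ρ hρ w' (h0 ▸ hP)
      exact ⟨τ, hτ, hτ0, j, ihψ (ρ j) (τ j) (hτP j) hj,
        fun i hij => ihφ (ρ i) (τ i) (hτP i) (hi i hij)⟩
  | ER φ ψ ihφ ihψ =>
      rintro w w' hP ⟨ρ, hρ, h0, hcase⟩
      obtain ⟨τ, hτ, hτ0, hτP⟩ := path_lift_s15 M ρ hρ w' (h0 ▸ hP)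
      refine ⟨τ, hτ, hτ0, ?_⟩
      rcases hcase with hall | ⟨j, hj, hi⟩
      · exact Or.inl fun i => ihψ (ρ i) (τ i) (hτP i) (hall i)
      · exact Or.inr ⟨j, ihφ (ρ j) (τ j) (hτP j) hj,
          fun i hij => ihψ (ρ i) (τ i) (hτP i) (hi i hij)⟩
  | AX φ ih =>
      exact fun w w' hP h w'' hP' => h w'' (M.P_trans w w' w'' hP hP')
  | AU φ ψ ihφ ihψ =>
      exact fun w w' hP h w'' hP' => h w'' (M.P_trans w w' w'' hP hP')
  | AR φ ψ ihφ ihψ =>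
      exact fun w w' hP h w'' hP' => h w'' (M.P_trans w w' w'' hP hP')

/-- The satisfaction set of `E(φ U ψ)` is `P`-upward closed. -/
theorem stmt15 {W Atom : Type} (M : BiModel W Atom) (w w' : W)
    (hP : M.P w w') (φ ψ : ICTL Atom)
    (h : Sat M (ICTL.EU φ ψ) w) : Sat M (ICTL.EU φ ψ) w' := by
  exact sat_mono M (ICTL.EU φ ψ) w w' hP h
end
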